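/- Let λ be an infinite cardinal and let δ = ℵ_β be a strong limit cardinal with λ < δ, cf(δ) ≤ λ, and 2^δ = ℵ_{β+ord(λ⁺)+1}. Then the cardinal δ^{+λ⁺} = ℵ_{β+ord(λ⁺)} satisfies cf(δ^{+λ⁺}) = λ⁺ and (δ^{+λ⁺})^λ > δ^{+λ⁺}. -/

import Mathlib

open Cardinal Set

/-!
Writing the strong limit `ℵ_β` as a sum of `cf ℵ_β` smaller cardinals `μᵢ` gives
`2 ^ ℵ_β = ∏ᵢ 2 ^ μᵢ ≤ ℵ_β ^ cf ℵ_β ≤ ℵ_β ^ λ`, while by hypothesis `2 ^ ℵ_β` is the successor of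
`ℵ_{β + λ⁺}`. The cofinality of `ℵ_{β + λ⁺}` is that of the limit ordinal `λ⁺`, which is regular.
-/

theorem Cardinal.exists_cof_family_lt_le_sum {c : Cardinal.{u}} (hc : ℵ₀ ≤ c) :
    ∃ (ι : Type u) (f : ι → Cardinal.{u}), #ι = c.ord.cof ∧ (∀ i, f i < c) ∧ c ≤ sum f := by
  induction c using Cardinal.inductionOn with | mk α
  obtain ⟨_, _, hα⟩ := exists_ord_eq_type_lt α
  have : NoMaxOrder α := by
    rw [← Ordinal.isSuccPrelimit_type_lt_iff, ← hα]
    exact (isSuccLimit_ord hc).isSuccPrelimit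
  obtain ⟨s, hs, hs'⟩ := Order.exists_cof_eq α
  refine ⟨s, fun i ↦ #(Iio i.1), by rw [hs', hα, Ordinal.cof_type], fun i ↦ mk_Iio_lt i.1 hα, ?_⟩
  refine mk_iUnion_le_sum_mk.trans' ?_
  rw [← mk_univ, ← isCofinal_iff_iUnion_Iio_eq_univ.1 hs, iUnion_coe_set]

theorem Cardinal.IsStrongLimit.two_power_le_power_cof {c : Cardinal} (hc : c.IsStrongLimit) :
    2 ^ c ≤ c ^ c.ord.cof := by
  obtain ⟨ι, f, hι, hfc, hcf⟩ := exists_cof_family_lt_le_sum hc.aleph0_le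
  calc 2 ^ c ≤ 2 ^ sum f := power_le_power_left two_ne_zero hcf
    _ = prod fun i ↦ 2 ^ f i := power_sum 2 f
    _ ≤ prod fun _ : ι ↦ c := prod_le_prod _ _ fun i ↦ (hc.isStrongPrelimit (hfc i)).le
    _ = c ^ c.ord.cof := by rw [prod_const', hι]

theorem Cardinal.cof_ord_aleph_add {β o : Ordinal} (ho : Order.IsSuccLimit o) :
    (aleph (β + o)).ord.cof = o.cof := by
  rw [ord_aleph, Ordinal.cof_omega (Ordinal.isSuccLimit_add β ho), Ordinal.cof_add β ho.ne_bot]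

theorem stmt12_general (l : Cardinal) (β : Ordinal)
    (hl : ℵ₀ ≤ l)
    (hsl : (aleph β).IsStrongLimit)
    (hcf : (aleph β).ord.cof ≤ l)
    (h2 : 2 ^ aleph β = aleph (β + (Order.succ l).ord + 1)) :
    (aleph (β + (Order.succ l).ord)).ord.cof = Order.succ l ∧
      aleph (β + (Order.succ l).ord) < aleph (β + (Order.succ l).ord) ^ l := by
  set δ := aleph (β + (Order.succ l).ord)
  have hsucc : ℵ₀ ≤ Order.succ l := hl.trans (Order.le_succ l)
  refine ⟨?_, ?_⟩
  · rw [cof_ord_aleph_add (isSuccLimit_ord hsucc)]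
    exact (isRegular_succ hl).cof_ord
  · calc δ < aleph (β + (Order.succ l).ord + 1) := aleph_lt_aleph.2 (Order.lt_add_one_iff.2 le_rfl)
      _ = 2 ^ aleph β := h2.symm
      _ ≤ aleph β ^ (aleph β).ord.cof := hsl.two_power_le_power_cof
      _ ≤ aleph β ^ l := power_le_power_left hsl.ne_zero hcf
      _ ≤ δ ^ l := power_le_power_right (aleph_le_aleph.2 le_self_add)

/-- Let `λ` be an infinite cardinal and let `δ = ℵ_β` be a strong limit cardinal
with `λ < δ`, `cf(δ) ≤ λ`, and `2^δ = ℵ_{β+ord(λ⁺)+1}`. Then the cardinal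
`δ^{+λ⁺} = ℵ_{β+ord(λ⁺)}` satisfies `cf(δ^{+λ⁺}) = λ⁺` and `(δ^{+λ⁺})^λ > δ^{+λ⁺}`. -/
theorem stmt12 (l : Cardinal) (β : Ordinal)
    (hl : ℵ₀ ≤ l)
    (hsl : (aleph β).IsStrongLimit)
    (hlδ : l < aleph β)
    (hcf : (aleph β).ord.cof ≤ l)
    (h2 : 2 ^ aleph β = aleph (β + (Order.succ l).ord + 1)) :
    (aleph (β + (Order.succ l).ord)).ord.cof = Order.succ l ∧
      aleph (β + (Order.succ l).ord) < aleph (β + (Order.succ l).ord) ^ l :=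
  stmt12_general l β hl hsl hcf h2
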